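/- (Cramér's lemma, second part.) Let Z be a real random variable with E(Z) = 0 and 0 < E(|Z|³) < ∞, and let φ_Z(ξ) = E(e^{iξZ}) be its characteristic function. If |ξ| ≤ (1/2)·E(Z²)/E(|Z|³), then |φ_Z(ξ)|² ≤ exp(−(ξ²/3) E(Z²)). -/

import Mathlib

/-!
With `σ² = E Z²`, Taylor's formula gives `‖e^{ix} - (1 + ix - x²/2)‖ ≤ |x|³/6`; integrating against the law of `Z`
yields `‖φ(ξ) - (1 - ξ²σ²/2)‖ ≤ |ξ|³ E|Z|³ / 6 ≤ ξ²σ²/12` under the hypothesis on `ξ`, hence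
`‖φ(ξ)‖ ≤ 1 - 5ξ²σ²/12`. Lyapunov's inequality `σ⁶ ≤ (E|Z|³)²` forces `ξ²σ² ≤ 1/4`, so this
bound is nonnegative and may be squared; `1 - y ≤ e^{-y}` then gives `‖φ(ξ)‖² ≤ e^{-5ξ²σ²/6}`.
-/

open MeasureTheory Complex

theorem norm_le_of_norm_deriv_le_mul_pow {E : Type*} [NormedAddCommGroup E] [NormedSpace ℝ E]
    {f f' : ℝ → E} (hf : ∀ t, HasDerivAt f (f' t) t) (h0 : f 0 = 0) {C : ℝ} {n : ℕ}
    (hf' : ∀ t, 0 ≤ t → ‖f' t‖ ≤ C * t ^ n) {x : ℝ} (hx : 0 ≤ x) :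
    ‖f x‖ ≤ C * x ^ (n + 1) / (n + 1) := by
  have hB (t : ℝ) : HasDerivAt (fun s ↦ C * s ^ (n + 1) / (n + 1)) (C * t ^ n) t :=
    (((hasDerivAt_pow (n + 1) t).const_mul C).div_const ((n : ℝ) + 1)).congr_deriv
      (by push_cast; field_simp)
  exact image_norm_le_of_norm_deriv_right_le_deriv_boundary (a := 0) (b := x)
    (fun t _ ↦ (hf t).continuousAt.continuousWithinAt) (fun t _ ↦ (hf t).hasDerivWithinAt)
    (by simp [h0]) hB (fun t ht ↦ hf' t ht.1) ⟨hx, le_rfl⟩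

theorem norm_le_of_norm_deriv_le_mul_abs_pow {E : Type*} [NormedAddCommGroup E] [NormedSpace ℝ E]
    {f f' : ℝ → E} (hf : ∀ t, HasDerivAt f (f' t) t) (h0 : f 0 = 0) {C : ℝ} {n : ℕ}
    (hf' : ∀ t, ‖f' t‖ ≤ C * |t| ^ n) (x : ℝ) :
    ‖f x‖ ≤ C * |x| ^ (n + 1) / (n + 1) := by
  rcases le_total 0 x with hx | hx
  · rw [abs_of_nonneg hx]
    exact norm_le_of_norm_deriv_le_mul_pow hf h0
      (fun t ht ↦ by simpa [abs_of_nonneg ht] using hf' t) hx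
  · rw [abs_of_nonpos hx]
    simpa using norm_le_of_norm_deriv_le_mul_pow (f := fun t ↦ f (-t)) (f' := fun t ↦ -f' (-t))
      (fun t ↦ by simpa [Function.comp_def] using (hf (-t)).scomp t (hasDerivAt_neg t))
      (by simpa using h0) (fun t ht ↦ by simpa [abs_of_nonneg ht] using hf' (-t)) (neg_nonneg.2 hx)

theorem hasDerivAt_I_mul_ofReal (t : ℝ) : HasDerivAt (fun s : ℝ ↦ I * s) I t := by
  simpa using ((hasDerivAt_id' (t : ℂ)).const_mul I).comp_ofReal

theorem hasDerivAt_exp_I_mul_ofReal (t : ℝ) :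
    HasDerivAt (fun s : ℝ ↦ exp (I * s)) (I * exp (I * t)) t := by
  simpa [mul_comm] using (hasDerivAt_I_mul_ofReal t).cexp

theorem norm_exp_I_mul_sub_one_sub_le (x : ℝ) :
    ‖exp (I * x) - 1 - I * x‖ ≤ |x| ^ 2 / 2 := by
  have h := norm_le_of_norm_deriv_le_mul_abs_pow (n := 1) (C := 1)
    (f := fun t : ℝ ↦ exp (I * t) - 1 - I * t) (f' := fun t ↦ I * (exp (I * t) - 1))
    (fun t ↦ (((hasDerivAt_exp_I_mul_ofReal t).sub_const 1).sub
      (hasDerivAt_I_mul_ofReal t)).congr_deriv (by ring))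
    (by simp)
    (fun t ↦ by simpa using Real.norm_exp_I_mul_ofReal_sub_one_le (x := t)) x
  simpa [one_add_one_eq_two] using h

theorem norm_exp_I_mul_sub_taylor_two_le (x : ℝ) :
    ‖exp (I * x) - (1 + I * x - x ^ 2 / 2)‖ ≤ |x| ^ 3 / 6 := by
  have hsq (t : ℝ) : HasDerivAt (fun s : ℝ ↦ (s : ℂ) ^ 2 / 2) (t : ℂ) t := by
    simpa using ((hasDerivAt_pow 2 (t : ℂ)).div_const 2).comp_ofReal
  have h := norm_le_of_norm_deriv_le_mul_abs_pow (n := 2) (C := 1 / 2)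
    (f := fun t : ℝ ↦ exp (I * t) - (1 + I * t - t ^ 2 / 2))
    (f' := fun t ↦ I * (exp (I * t) - 1 - I * t))
    (fun t ↦ ((hasDerivAt_exp_I_mul_ofReal t).sub
      (((hasDerivAt_I_mul_ofReal t).const_add 1).sub (hsq t))).congr_deriv
        (by ring_nf; rw [I_sq]; ring))
    (by simp)
    (fun t ↦ by
      rw [norm_mul, norm_I, one_mul]
      linarith [norm_exp_I_mul_sub_one_sub_le t])
    x
  convert h using 1
  norm_num
  ring

theorem three_mul_mul_sq_le (c u : ℝ) (hc : 0 ≤ c) : 3 * c * u ^ 2 ≤ 2 * |u| ^ 3 + c ^ 3 := by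
  nlinarith [mul_nonneg (sq_nonneg (|u| - c)) (by positivity : 0 ≤ 2 * |u| + c), sq_abs u]

section Moments

variable {Ω : Type*} [MeasurableSpace Ω] {P : Measure Ω} {Z : Ω → ℝ}

theorem MeasureTheory.MemLp.integrable_abs_pow_three (hZ : MemLp Z 3 P) :
    Integrable (fun ω ↦ |Z ω| ^ 3) P := by
  simpa using hZ.integrable_norm_pow (by norm_num)

variable [IsProbabilityMeasure P]

theorem MeasureTheory.MemLp.integrable_sq_of_three (hZ : MemLp Z 3 P) :
    Integrable (fun ω ↦ Z ω ^ 2) P :=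
  (hZ.mono_exponent (by norm_num)).integrable_sq

theorem integral_sq_pow_three_le (hZ : MemLp Z 3 P) :
    (∫ ω, Z ω ^ 2 ∂P) ^ 3 ≤ (∫ ω, |Z ω| ^ 3 ∂P) ^ 2 := by
  set c := √(∫ ω, Z ω ^ 2 ∂P)
  have hc2 : c ^ 2 = ∫ ω, Z ω ^ 2 ∂P := Real.sq_sqrt (integral_nonneg fun ω ↦ sq_nonneg (Z ω))
  have h : 3 * c * c ^ 2 ≤ 2 * (∫ ω, |Z ω| ^ 3 ∂P) + c ^ 3 := by
    have := integral_mono (hZ.integrable_sq_of_three.const_mul (3 * c))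
      ((hZ.integrable_abs_pow_three.const_mul 2).add (integrable_const (c ^ 3)))
      fun ω ↦ three_mul_mul_sq_le c (Z ω) (Real.sqrt_nonneg _)
    simpa [integral_add (hZ.integrable_abs_pow_three.const_mul 2) (integrable_const _),
      integral_const_mul, hc2] using this
  have hc3 : c ^ 3 ≤ ∫ ω, |Z ω| ^ 3 ∂P := by nlinarith
  calc (∫ ω, Z ω ^ 2 ∂P) ^ 3 = (c ^ 3) ^ 2 := by rw [← hc2]; ring
    _ ≤ _ := pow_le_pow_left₀ (by positivity) hc3 2

theorem norm_integral_exp_I_mul_sub_taylor_two_le (hZ : MemLp Z 3 P) (ξ : ℝ) :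
    ‖∫ ω, exp (I * ξ * Z ω) ∂P
        - (1 + I * ξ * (∫ ω, Z ω ∂P : ℝ) - (ξ ^ 2 / 2 * ∫ ω, Z ω ^ 2 ∂P : ℝ))‖
      ≤ |ξ| ^ 3 / 6 * ∫ ω, |Z ω| ^ 3 ∂P := by
  have hZ1 : Integrable (fun ω ↦ (Z ω : ℂ)) P := (hZ.integrable (by norm_num)).ofReal
  have hZ2 : Integrable (fun ω ↦ ((ξ ^ 2 / 2 * Z ω ^ 2 : ℝ) : ℂ)) P :=
    (hZ.integrable_sq_of_three.const_mul _).ofReal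
  have hlin : Integrable (fun ω ↦ 1 + I * ξ * Z ω) P := (integrable_const 1).add (hZ1.const_mul _)
  have htaylor : Integrable (fun ω ↦ 1 + I * ξ * Z ω - ((ξ ^ 2 / 2 * Z ω ^ 2 : ℝ) : ℂ)) P :=
    hlin.sub hZ2
  have hint : ∫ ω, (1 + I * ξ * Z ω - ((ξ ^ 2 / 2 * Z ω ^ 2 : ℝ) : ℂ)) ∂P
      = 1 + I * ξ * (∫ ω, Z ω ∂P : ℝ) - (ξ ^ 2 / 2 * ∫ ω, Z ω ^ 2 ∂P : ℝ) := by
    rw [integral_sub hlin hZ2,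
      integral_add (integrable_const 1) (hZ1.const_mul _), integral_const_mul,
      integral_complex_ofReal, integral_complex_ofReal, integral_const_mul]
    simp
  have hexp : Integrable (fun ω ↦ exp (I * ξ * Z ω)) P := by
    refine (integrable_const (1 : ℝ)).mono'
      ((by fun_prop : Continuous fun x : ℝ ↦ exp (I * ξ * x)).comp_aestronglyMeasurable
        hZ.aestronglyMeasurable) (ae_of_all _ fun ω ↦ ?_)
    simp [norm_exp]
  rw [← hint, ← integral_sub hexp htaylor, ← integral_const_mul]
  refine (norm_integral_le_integral_norm _).trans
    (integral_mono (hexp.sub htaylor).norm (hZ.integrable_abs_pow_three.const_mul _) fun ω ↦ ?_)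
  have hω : exp (I * ξ * Z ω) - (1 + I * ξ * Z ω - ((ξ ^ 2 / 2 * Z ω ^ 2 : ℝ) : ℂ))
      = exp (I * ↑(ξ * Z ω)) - (1 + I * ↑(ξ * Z ω) - ↑(ξ * Z ω) ^ 2 / 2) := by
    push_cast
    ring_nf
  rw [hω]
  exact (norm_exp_I_mul_sub_taylor_two_le _).trans_eq (by rw [abs_mul]; ring)

theorem sq_mul_integral_sq_le_one_div_four (hZ : MemLp Z 3 P) (hm3 : 0 < ∫ ω, |Z ω| ^ 3 ∂P)
    {ξ : ℝ} (hξ : |ξ| * ∫ ω, |Z ω| ^ 3 ∂P ≤ (∫ ω, Z ω ^ 2 ∂P) / 2) :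
    ξ ^ 2 * ∫ ω, Z ω ^ 2 ∂P ≤ 1 / 4 := by
  have hm2 : 0 ≤ ∫ ω, Z ω ^ 2 ∂P := integral_nonneg fun ω ↦ sq_nonneg (Z ω)
  have hlyap := integral_sq_pow_three_le hZ
  have hsq := pow_le_pow_left₀ (by positivity) hξ 2
  rw [mul_pow, sq_abs] at hsq
  refine le_of_mul_le_mul_right ?_ (pow_pos hm3 2)
  nlinarith

end Moments

theorem one_sub_sq_le_exp_neg_two_mul {y : ℝ} (hy : y ≤ 1) : (1 - y) ^ 2 ≤ Real.exp (-2 * y) := by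
  calc (1 - y) ^ 2 ≤ Real.exp (-y) ^ 2 :=
        pow_le_pow_left₀ (by linarith) (by linarith [Real.add_one_le_exp (-y)]) 2
    _ = Real.exp (-2 * y) := by rw [← Real.exp_nat_mul]; ring_nf

/-- Cramér's lemma, second part: if `Z` is a centered real random variable with
`0 < E|Z|³ < ∞` and `|ξ| ≤ (1/2) E(Z²)/E|Z|³`, then
`|φ_Z(ξ)|² ≤ exp(−(ξ²/3) E(Z²))`. -/
theorem cramer_charFun_bound_small
    {Ω : Type*} [MeasurableSpace Ω] (P : Measure Ω) [IsProbabilityMeasure P]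
    (Z : Ω → ℝ) (hZ3 : MemLp Z 3 P) (hZmean : ∫ ω, Z ω ∂P = 0)
    (hZ3pos : 0 < ∫ ω, |Z ω| ^ 3 ∂P)
    (ξ : ℝ) (hξ : |ξ| ≤ (1 / 2) * (∫ ω, Z ω ^ 2 ∂P) / ∫ ω, |Z ω| ^ 3 ∂P) :
    ‖∫ ω, Complex.exp (Complex.I * (ξ : ℂ) * ((Z ω : ℝ) : ℂ)) ∂P‖ ^ 2 ≤
      Real.exp (-(ξ ^ 2 / 3) * ∫ ω, Z ω ^ 2 ∂P) := by
  set m2 := ∫ ω, Z ω ^ 2 ∂P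
  set m3 := ∫ ω, |Z ω| ^ 3 ∂P
  have hξm3 : |ξ| * m3 ≤ m2 / 2 := by
    rw [le_div_iff₀ hZ3pos] at hξ
    linarith
  have hsmall : ξ ^ 2 * m2 ≤ 1 / 4 := sq_mul_integral_sq_le_one_div_four hZ3 hZ3pos hξm3
  have hm2 : 0 ≤ m2 := integral_nonneg fun ω ↦ sq_nonneg (Z ω)
  have hcube : |ξ| ^ 3 / 6 * m3 ≤ ξ ^ 2 * m2 / 12 := by
    have := mul_le_mul_of_nonneg_left hξm3 (sq_nonneg ξ)
    rw [← sq_abs ξ] at this ⊢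
    linarith
  have htaylor := norm_integral_exp_I_mul_sub_taylor_two_le hZ3 ξ
  simp only [hZmean, ofReal_zero, mul_zero, add_zero] at htaylor
  have hφ : ‖∫ ω, exp (I * ξ * Z ω) ∂P‖ ≤ 1 - 5 / 12 * (ξ ^ 2 * m2) := by
    have hc : ‖(1 : ℂ) - ((ξ ^ 2 / 2 * m2 : ℝ) : ℂ)‖ = 1 - ξ ^ 2 * m2 / 2 := by
      rw [← ofReal_one, ← ofReal_sub, norm_real, Real.norm_of_nonneg (by linarith)]
      ring
    linarith [norm_le_norm_sub_add (∫ ω, exp (I * ξ * Z ω) ∂P) (1 - ((ξ ^ 2 / 2 * m2 : ℝ) : ℂ))]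
  calc _ ≤ (1 - 5 / 12 * (ξ ^ 2 * m2)) ^ 2 := pow_le_pow_left₀ (norm_nonneg _) hφ 2
    _ ≤ Real.exp (-2 * (5 / 12 * (ξ ^ 2 * m2))) := one_sub_sq_le_exp_neg_two_mul (by linarith)
    _ ≤ Real.exp (-(ξ ^ 2 / 3) * m2) := Real.exp_le_exp.2 (by nlinarith)
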